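/- Suppose the exact channel quantities decompose as W = A W̃, Q = A Q̃₀ A* + σ² I with A*A = I, and the filter satisfies W̃ = Q̃⁻¹ H̃Ṽ where Q̃ = Q̃₀ + σ² I. If additionally A* A = I and W lies in the column space of A, then for each stream r: [W]_r* Q [W]_r = [W̃]_r* Q̃ [W̃]_r, and hence the SINR computed from (W, Q, H, P) with H = A H̃ B*, P = B Ṽ equals the SINR computed from the compressed quantities (W̃, Q̃, H̃, Ṽ). -/
import Mathlib


open scoped BigOperators Matrix ComplexOrder

/-- Mode-1 product of a 3-order tensor with a matrix:
`(X ×₁ U)_{j,i₂,i₃} = ∑_{i₁} X_{i₁,i₂,i₃} U_{j,i₁}`. -/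
noncomputable def mode1 {I1 I2 I3 J : ℕ} (X : Fin I1 → Fin I2 → Fin I3 → ℂ)
    (U : Matrix (Fin J) (Fin I1) ℂ) : Fin J → Fin I2 → Fin I3 → ℂ :=
  fun j i2 i3 => ∑ i1, X i1 i2 i3 * U j i1

/-- Mode-2 product. -/
noncomputable def mode2 {I1 I2 I3 J : ℕ} (X : Fin I1 → Fin I2 → Fin I3 → ℂ)
    (U : Matrix (Fin J) (Fin I2) ℂ) : Fin I1 → Fin J → Fin I3 → ℂ :=
  fun i1 j i3 => ∑ i2, X i1 i2 i3 * U j i2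

/-- Mode-3 product. -/
noncomputable def mode3 {I1 I2 I3 J : ℕ} (X : Fin I1 → Fin I2 → Fin I3 → ℂ)
    (U : Matrix (Fin J) (Fin I3) ℂ) : Fin I1 → Fin I2 → Fin J → ℂ :=
  fun i1 i2 j => ∑ i3, X i1 i2 i3 * U j i3

/-- Squared Frobenius norm of a 3-order tensor. -/
noncomputable def frobSq {I1 I2 I3 : ℕ} (X : Fin I1 → Fin I2 → Fin I3 → ℂ) : ℝ :=
  ∑ i1, ∑ i2, ∑ i3, ‖X i1 i2 i3‖ ^ 2

/-- Frobenius norm of a 3-order tensor. -/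
noncomputable def frob {I1 I2 I3 : ℕ} (X : Fin I1 → Fin I2 → Fin I3 → ℂ) : ℝ :=
  Real.sqrt (frobSq X)

/-- `G ×₁ A ×₂ B ×₃ C`. -/
noncomputable def recon {R1 R2 R3 I1 I2 I3 : ℕ} (G : Fin R1 → Fin R2 → Fin R3 → ℂ)
    (A : Matrix (Fin I1) (Fin R1) ℂ) (B : Matrix (Fin I2) (Fin R2) ℂ)
    (C : Matrix (Fin I3) (Fin R3) ℂ) : Fin I1 → Fin I2 → Fin I3 → ℂ :=
  mode3 (mode2 (mode1 G A) B) C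

/-- `X ×₁ A* ×₂ B* ×₃ C*`. -/
noncomputable def compress {I1 I2 I3 R1 R2 R3 : ℕ} (X : Fin I1 → Fin I2 → Fin I3 → ℂ)
    (A : Matrix (Fin I1) (Fin R1) ℂ) (B : Matrix (Fin I2) (Fin R2) ℂ)
    (C : Matrix (Fin I3) (Fin R3) ℂ) : Fin R1 → Fin R2 → Fin R3 → ℂ :=
  mode3 (mode2 (mode1 X Aᴴ) Bᴴ) Cᴴ

/-- Mode-1 matricization of a 3-order tensor. -/
noncomputable def mat1 {I1 I2 I3 : ℕ} (X : Fin I1 → Fin I2 → Fin I3 → ℂ) :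
    Matrix (Fin I1) (Fin (I2 * I3)) ℂ :=
  Matrix.of fun i1 q => X i1 (finProdFinEquiv.symm q).1 (finProdFinEquiv.symm q).2


lemma quad_entry {M L : ℕ} (W : Matrix (Fin M) (Fin L) ℂ) (Q : Matrix (Fin M) (Fin M) ℂ)
    (r : Fin L) :
    star (fun i => W i r) ⬝ᵥ Q.mulVec (fun i => W i r) = (Wᴴ * Q * W) r r := by
  simp only [dotProduct, Matrix.mulVec, Matrix.mul_apply, Matrix.conjTranspose_apply,
    Pi.star_apply, Finset.mul_sum, Finset.sum_mul]
  rw [Finset.sum_comm]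
  exact Finset.sum_congr rfl fun j _ => Finset.sum_congr rfl fun i _ => by ring

lemma dot_entry {M L : ℕ} (W Y : Matrix (Fin M) (Fin L) ℂ) (r : Fin L) :
    star (fun i => W i r) ⬝ᵥ (fun i => Y i r) = (Wᴴ * Y) r r := by
  simp [dotProduct, Matrix.mul_apply, Matrix.conjTranspose_apply]

/-- with `W = A W̃`, `Q = A Q̃₀ A* + σ² I`, `W̃ = Q̃⁻¹ H̃ Ṽ`,
`H = A H̃ B*`, `P = B Ṽ`, the interference quadratic form and hence the SINR of every
stream computed from `(W, Q, H, P)` equal those computed from `(W̃, Q̃, H̃, Ṽ)`. -/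
theorem stmt9 {M m N n L : ℕ}
    (A : Matrix (Fin M) (Fin m) ℂ) (B : Matrix (Fin N) (Fin n) ℂ)
    (hA : Aᴴ * A = 1) (hB : Bᴴ * B = 1)
    (Qt0 : Matrix (Fin m) (Fin m) ℂ) (hQt0 : Qt0.PosSemidef) (σ : ℝ) (hσ : 0 < σ)
    (Ht : Matrix (Fin m) (Fin n) ℂ) (Vt : Matrix (Fin n) (Fin L) ℂ)
    (Qt : Matrix (Fin m) (Fin m) ℂ)
    (hQt : Qt = Qt0 + ((σ : ℂ) ^ 2) • (1 : Matrix (Fin m) (Fin m) ℂ))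
    (Wt : Matrix (Fin m) (Fin L) ℂ) (hWt : Wt = Qt⁻¹ * (Ht * Vt))
    (Q : Matrix (Fin M) (Fin M) ℂ)
    (hQ : Q = A * Qt0 * Aᴴ + ((σ : ℂ) ^ 2) • (1 : Matrix (Fin M) (Fin M) ℂ))
    (W : Matrix (Fin M) (Fin L) ℂ) (hW : W = A * Wt)
    (H : Matrix (Fin M) (Fin N) ℂ) (hH : H = A * Ht * Bᴴ)
    (P : Matrix (Fin N) (Fin L) ℂ) (hP : P = B * Vt) :
    ∀ r : Fin L,
      (star (fun i => W i r) ⬝ᵥ Q.mulVec (fun i => W i r) =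
        star (fun i => Wt i r) ⬝ᵥ Qt.mulVec (fun i => Wt i r)) ∧
      (‖star (fun i => W i r) ⬝ᵥ (fun i => (H * P) i r)‖ ^ 2 /
          ((star (fun i => W i r) ⬝ᵥ Q.mulVec (fun i => W i r)).re -
            ‖star (fun i => W i r) ⬝ᵥ (fun i => (H * P) i r)‖ ^ 2) =
        ‖star (fun i => Wt i r) ⬝ᵥ (fun i => (Ht * Vt) i r)‖ ^ 2 /
          ((star (fun i => Wt i r) ⬝ᵥ Qt.mulVec (fun i => Wt i r)).re -
            ‖star (fun i => Wt i r) ⬝ᵥ (fun i => (Ht * Vt) i r)‖ ^ 2)) := by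
  intro r
  have hQW : Wᴴ * Q * W = Wtᴴ * Qt * Wt := by
    have h1 : Q * W = A * (Qt * Wt) := by
      subst hQ hW hQt
      simp only [Matrix.add_mul, Matrix.smul_mul, Matrix.mul_add, Matrix.mul_smul,
        Matrix.one_mul, Matrix.mul_one]
      rw [show A * Qt0 * Aᴴ * (A * Wt) = A * Qt0 * (Aᴴ * A) * Wt by
        simp only [Matrix.mul_assoc], hA]
      simp only [Matrix.mul_one, Matrix.mul_assoc, Matrix.add_mul, Matrix.mul_add,
        Matrix.mul_smul]
    rw [Matrix.mul_assoc, h1, hW]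
    rw [show (A * Wt)ᴴ * (A * (Qt * Wt)) = Wtᴴ * (Aᴴ * A) * (Qt * Wt) by
      simp only [Matrix.conjTranspose_mul, Matrix.mul_assoc], hA]
    simp only [Matrix.mul_one, Matrix.mul_assoc]
  have hHP : Wᴴ * (H * P) = Wtᴴ * (Ht * Vt) := by
    subst hH hP hW
    rw [show A * Ht * Bᴴ * (B * Vt) = A * (Ht * ((Bᴴ * B) * Vt)) by
      simp only [Matrix.mul_assoc], hB, Matrix.one_mul]
    rw [show (A * Wt)ᴴ * (A * (Ht * Vt)) = Wtᴴ * (Aᴴ * A) * (Ht * Vt) by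
      simp only [Matrix.conjTranspose_mul, Matrix.mul_assoc], hA]
    simp only [Matrix.mul_one, Matrix.mul_assoc]
  constructor
  · rw [quad_entry, quad_entry, hQW]
  · rw [quad_entry, quad_entry, hQW, dot_entry, dot_entry, hHP]
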